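/- Let d ≥ 1 with 1 ≤ d ≤ 4, m ≥ 3, s = 2d+3, and let n be a positive multiple of s. Suppose ℓ = (k·s − (−1)^a·(d+1)·m) mod n for some a ∈ {1,2} and integer k. Then λ_1^d(C_m ×^{σ_ℓ} C_n) = 2d+2. -/

import Mathlib

/-!
Lower bound: if `1 ≤ d ≤ Δ ≤ δ(G)`, the neighbours of a vertex carry pairwise distinct labels at
distance at least `d` from its own. In a window of span at most `2d + Δ - 3` a label in the middle
leaves fewer than `Δ` such slots, so every label sits near one end of the window; the neighbours of
a vertex near the bottom are then squeezed into fewer than `Δ` slots near the top (or vice versa).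
The bundle has minimum degree `4`, and `d ≤ 4`.

Upper bound: label `(i, j)` by `t i + j` in `ZMod s` with `t = d + a`. The hypothesis on `ℓ` says
`ℓ ≡ t m (mod s)`, which makes the labeling consistent across the twisted edges from `m - 1` to
`0`. Every edge changes the label by `t ± 1 ∈ [d, s - d]`, and every path of length two by a
nonzero even number of absolute value less than `2s`, which the odd `s` cannot divide.
-/

/-- `f` is an `L(d,1)`-labeling of `G`. -/
def IsLD1Labeling {V : Type*} (G : SimpleGraph V) (d : ℕ) (f : V → ℕ) : Prop :=
  (∀ u v, G.Adj u v → (d : ℤ) ≤ |(f u : ℤ) - (f v : ℤ)|) ∧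
  (∀ u v, G.dist u v = 2 → (1 : ℤ) ≤ |(f u : ℤ) - (f v : ℤ)|)

/-- The span of a labeling. -/
noncomputable def labelSpan {V : Type*} (f : V → ℕ) : ℕ :=
  sSup (Set.range f) - sInf (Set.range f)

/-- `λ₁ᵈ(G)`: the minimum span over all `L(d,1)`-labelings of `G`. -/
noncomputable def lambdaLD1 {V : Type*} (G : SimpleGraph V) (d : ℕ) : ℕ :=
  sInf {k | ∃ f : V → ℕ, IsLD1Labeling G d f ∧ labelSpan f = k}

/-- The direct graph bundle `C_m ×^{σ_ℓ} C_n` with base `C_m`, fibre `C_n` and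
cyclic `ℓ`-shift on the edge from `m-1` to `0`. -/
def directBundle (m n : ℕ) (ℓ : ZMod n) : SimpleGraph (ZMod m × ZMod n) :=
  SimpleGraph.fromRel (fun u v =>
    v.1 = u.1 + 1 ∧
      ((u.1 = -1 ∧ (v.2 = u.2 + 1 + ℓ ∨ v.2 = u.2 - 1 + ℓ)) ∨
       (u.1 ≠ -1 ∧ (v.2 = u.2 + 1 ∨ v.2 = u.2 - 1))))

open Finset

namespace SimpleGraph

variable {V : Type*} {G : SimpleGraph V} {u v : V}

lemma dist_eq_two_iff :
    G.dist u v = 2 ↔ u ≠ v ∧ ¬G.Adj u v ∧ (G.commonNeighbors u v).Nonempty := by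
  rw [← edist_eq_two_iff]
  refine ⟨fun h ↦ ?_, fun h ↦ by rw [dist, h]; rfl⟩
  rw [← (Reachable.of_dist_ne_zero (h ▸ two_ne_zero)).coe_dist_eq_edist, h]
  rfl

end SimpleGraph

lemma Finset.card_le_of_forall_far {S : Finset ℕ} {x d lo hi : ℕ}
    (h : ∀ y ∈ S, lo ≤ y ∧ y ≤ hi ∧ (y + d ≤ x ∨ x + d ≤ y)) :
    #S ≤ (x + 1 - d - lo) + (hi + 1 - (x + d)) := by
  calc #S ≤ #(Ico lo (x + 1 - d) ∪ Icc (x + d) hi) := card_le_card fun y hy ↦ by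
        have := h y hy
        simp only [mem_union, mem_Ico, mem_Icc]
        omega
    _ ≤ _ := (card_union_le _ _).trans (by simp)

lemma ZMod.le_abs_val_sub_val {s d D : ℕ} [NeZero s] {x y : ZMod s} (h : x - y = D)
    (hdD : d ≤ D) (hDs : D + d ≤ s) : (d : ℤ) ≤ |(x.val : ℤ) - y.val| := by
  rcases Nat.eq_zero_or_pos d with rfl | hd
  · simp
  have hD : (D : ZMod s).val = D := ZMod.val_cast_of_lt (by omega)
  rcases le_total y.val x.val with hle | hle
  · have := ZMod.val_sub hle
    rw [h, hD] at this
    rw [le_abs]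
    omega
  · have : NeZero (D : ZMod s) := ⟨fun h0 ↦ by rw [h0, ZMod.val_zero] at hD; omega⟩
    have := ZMod.val_sub hle
    rw [← neg_sub, h, ZMod.val_neg_of_ne_zero, hD] at this
    rw [le_abs]
    omega

lemma ZMod.intCast_ne_zero_of_even {s : ℕ} (hs : Odd s) {e : ℤ} (he : Even e) (h0 : e ≠ 0)
    (hlt : e.natAbs < 2 * s) : (e : ZMod s) ≠ 0 := by
  rw [Ne, ZMod.intCast_zmod_eq_zero_iff_dvd, ← Int.natAbs_dvd_natAbs, Int.natAbs_natCast]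
  intro hdvd
  have := Nat.eq_of_dvd_of_lt_two_mul (Int.natAbs_ne_zero.2 h0) hdvd hlt
  exact Nat.not_even_iff_odd.2 hs (this ▸ Int.natAbs_even.2 he)

lemma ZMod.intCast_ne_zero_of_natAbs_lt {q : ℕ} {z : ℤ} (hz : z ≠ 0) (h : z.natAbs < q) :
    (z : ZMod q) ≠ 0 := by
  rw [Ne, ZMod.intCast_zmod_eq_zero_iff_dvd]
  exact fun hdvd ↦ hz (Int.eq_zero_of_dvd_of_natAbs_lt_natAbs hdvd (by simpa using h))

lemma ZMod.val_add_one_of_ne_neg_one {q : ℕ} [NeZero q] {i : ZMod q} (hi : i ≠ -1) :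
    (i + 1).val = i.val + 1 := by
  have hlt : i.val + 1 < q := by
    refine lt_of_le_of_ne (ZMod.val_lt i) fun h ↦ hi ?_
    rw [eq_neg_iff_add_eq_zero, ← ZMod.natCast_zmod_val i, ← Nat.cast_add_one, h,
      ZMod.natCast_self]
  rw [← ZMod.val_cast_of_lt hlt, Nat.cast_add_one, ZMod.natCast_zmod_val]

section Labeling

open SimpleGraph

variable {V : Type*} {G : SimpleGraph V} {d : ℕ} {f : V → ℕ}

lemma IsLD1Labeling.add_le_or_add_le (hf : IsLD1Labeling G d f) {u v : V} (h : G.Adj u v) :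
    f v + d ≤ f u ∨ f u + d ≤ f v := by
  have := hf.1 u v h
  rw [le_abs] at this
  omega

lemma IsLD1Labeling.injOn_neighborSet (hf : IsLD1Labeling G d f) (hd : 1 ≤ d) (v : V) :
    Set.InjOn f (G.neighborSet v) := by
  intro w hw w' hw' heq
  by_contra hne
  have : (1 : ℤ) ≤ |(f w : ℤ) - f w'| := by
    by_cases hadj : G.Adj w w'
    · exact le_trans (by exact_mod_cast hd) (hf.1 w w' hadj)
    · exact hf.2 w w' (dist_eq_two_iff.2
        ⟨hne, hadj, v, G.mem_commonNeighbors.2 ⟨hw.symm, hw'.symm⟩⟩)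
  simp [heq] at this

lemma labelSpan_le_of_forall_le {k : ℕ} (h : ∀ v, f v ≤ k) : labelSpan f ≤ k :=
  (Nat.sub_le _ _).trans (csSup_le' (Set.forall_mem_range.2 h))

lemma lambdaLD1_eq_of_le_of_forall_le {k : ℕ} (hf : IsLD1Labeling G d f) (hspan : labelSpan f ≤ k)
    (hlow : ∀ g, IsLD1Labeling G d g → k ≤ labelSpan g) : lambdaLD1 G d = k := by
  rw [lambdaLD1]
  exact le_antisymm ((Nat.sInf_le (by exact ⟨f, hf, rfl⟩)).trans hspan)
    (le_csInf ⟨_, f, hf, rfl⟩ (by rintro _ ⟨g, hg, rfl⟩; exact hlow g hg))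

variable [Fintype V] [DecidableRel G.Adj]

lemma IsLD1Labeling.card_image_neighborFinset (hf : IsLD1Labeling G d f) (hd : 1 ≤ d) (v : V) :
    #((G.neighborFinset v).image f) = G.degree v := by
  rw [card_image_of_injOn (by simpa using hf.injOn_neighborSet hd v),
    card_neighborFinset_eq_degree]

theorem IsLD1Labeling.two_mul_add_le_labelSpan [Nonempty V] (hf : IsLD1Labeling G d f) {Δ : ℕ}
    (hd : 1 ≤ d) (hdΔ : d ≤ Δ) (hΔ : Δ ≤ G.minDegree) : 2 * d + Δ ≤ labelSpan f + 2 := by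
  by_contra! hspan
  have hμ : ∀ v, sInf (Set.range f) ≤ f v := fun v ↦ Nat.sInf_le ⟨v, rfl⟩
  have hM : ∀ v, f v ≤ sSup (Set.range f) :=
    fun v ↦ le_csSup (Set.finite_range f).bddAbove ⟨v, rfl⟩
  unfold labelSpan at hspan
  generalize sInf (Set.range f) = μ at hspan hμ
  generalize sSup (Set.range f) = M at hspan hM
  have hdeg (v : V) : Δ ≤ #((G.neighborFinset v).image f) :=
    hf.card_image_neighborFinset hd v ▸ hΔ.trans (G.minDegree_le_degree v)
  -- Fewer than `Δ` labels are far from a label in the middle of the window.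
  have hclass : ∀ v,
      (f v < μ + d ∧ f v + d + Δ ≤ M + 1) ∨ (M < f v + d ∧ μ + d + Δ ≤ f v + 1) := by
    intro v
    have := (hdeg v).trans (card_le_of_forall_far (x := f v) (lo := μ) (hi := M) (by
      simp only [mem_image, mem_neighborFinset]
      rintro _ ⟨w, hw, rfl⟩
      exact ⟨hμ w, hM w, hf.add_le_or_add_le hw⟩))
    have := hμ v
    have := hM v
    omega
  obtain ⟨v₀⟩ := ‹Nonempty V›
  have := hμ v₀
  have := hM v₀
  have hnbr := fun w (hw : G.Adj v₀ w) ↦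
    (⟨hf.add_le_or_add_le hw, hμ w, hM w, hclass w⟩ : _ ∧ _ ∧ _ ∧ _)
  obtain ⟨lo, hi, hsmall, hwindow⟩ : ∃ lo hi : ℕ, hi + 1 - lo < Δ ∧
      ∀ w, G.Adj v₀ w → lo ≤ f w ∧ f w ≤ hi := by
    rcases hclass v₀ with h | h
    · exact ⟨μ + d + Δ - 1, M, by omega, fun w hw ↦ by have := hnbr w hw; omega⟩
    · exact ⟨μ, M + 1 - d - Δ, by omega, fun w hw ↦ by have := hnbr w hw; omega⟩
  have := (hdeg v₀).trans (card_le_card (t := Icc lo hi) (by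
    simp only [subset_iff, mem_image, mem_neighborFinset, mem_Icc]
    rintro _ ⟨w, hw, rfl⟩
    exact hwindow w hw))
  simp only [Nat.card_Icc] at this
  omega

end Labeling

section Bundle

open SimpleGraph

variable {m n : ℕ}

def bundleSucc (ℓ : ZMod n) (ε : ℤ) (u : ZMod m × ZMod n) : ZMod m × ZMod n :=
  (u.1 + 1, u.2 + ε + if u.1 = -1 then ℓ else 0)

lemma bundleSucc_injective (ℓ : ZMod n) (ε : ℤ) :
    Function.Injective (bundleSucc (m := m) ℓ ε) := by
  rintro ⟨i, j⟩ ⟨i', j'⟩ h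
  simp only [bundleSucc, Prod.mk.injEq, add_left_inj] at h
  obtain ⟨rfl, h⟩ := h
  simpa using h

lemma directBundle_adj_iff {ℓ : ZMod n} {u v : ZMod m × ZMod n} :
    (directBundle m n ℓ).Adj u v ↔ u ≠ v ∧
      ∃ ε : ℤ, (ε = 1 ∨ ε = -1) ∧ (v = bundleSucc ℓ ε u ∨ u = bundleSucc ℓ ε v) := by
  have key : ∀ u v : ZMod m × ZMod n, (v.1 = u.1 + 1 ∧
      ((u.1 = -1 ∧ (v.2 = u.2 + 1 + ℓ ∨ v.2 = u.2 - 1 + ℓ)) ∨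
        (u.1 ≠ -1 ∧ (v.2 = u.2 + 1 ∨ v.2 = u.2 - 1)))) ↔
      ∃ ε : ℤ, (ε = 1 ∨ ε = -1) ∧ v = bundleSucc ℓ ε u := by
    rintro ⟨i, j⟩ ⟨i', j'⟩
    by_cases hi : i = -1 <;>
      simp [bundleSucc, hi, sub_eq_add_neg, or_and_right, exists_or] <;> tauto
  simp only [directBundle, fromRel_adj, key]
  constructor
  · rintro ⟨hne, ⟨ε, hε, h⟩ | ⟨ε, hε, h⟩⟩
    exacts [⟨hne, ε, hε, .inl h⟩, ⟨hne, ε, hε, .inr h⟩]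
  · rintro ⟨hne, ε, hε, h | h⟩
    exacts [⟨hne, .inl ⟨ε, hε, h⟩⟩, ⟨hne, .inr ⟨ε, hε, h⟩⟩]

lemma four_le_minDegree_directBundle [NeZero m] [NeZero n] (hm : 3 ≤ m) (hn : 3 ≤ n)
    (ℓ : ZMod n) [DecidableRel (directBundle m n ℓ).Adj] :
    4 ≤ (directBundle m n ℓ).minDegree := by
  refine le_minDegree_of_forall_le_degree _ _ fun v ↦ ?_
  have h1 : ((1 : ℤ) : ZMod m) ≠ 0 := ZMod.intCast_ne_zero_of_natAbs_lt one_ne_zero (by omega)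
  have h2m : ((2 : ℤ) : ZMod m) ≠ 0 := ZMod.intCast_ne_zero_of_natAbs_lt two_ne_zero (by omega)
  have h2n : ((2 : ℤ) : ZMod n) ≠ 0 := ZMod.intCast_ne_zero_of_natAbs_lt two_ne_zero (by omega)
  push_cast at h1 h2m h2n
  have hfst : v.1 ≠ v.1 - 1 := fun h ↦ h1 (by linear_combination h)
  have hfst' : v.1 + 1 ≠ v.1 - 1 := fun h ↦ h2m (by linear_combination h)
  have hsnd : (1 : ZMod n) ≠ -1 := fun h ↦ h2n (by linear_combination h)
  have hsnd' : v.2 - 1 ≠ v.2 + 1 := fun h ↦ h2n (by linear_combination -h)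
  let pred (ε : ℤ) : ZMod m × ZMod n := (v.1 - 1, v.2 - ε - if v.1 - 1 = -1 then ℓ else 0)
  have hpred (ε : ℤ) : v = bundleSucc ℓ ε (pred ε) := by
    refine Prod.ext ?_ ?_ <;> simp only [bundleSucc, pred] <;> abel
  have hsub : {bundleSucc ℓ 1 v, bundleSucc ℓ (-1) v, pred 1, pred (-1)} ⊆
      (directBundle m n ℓ).neighborFinset v := by
    simp only [Finset.insert_subset_iff, Finset.singleton_subset_iff, mem_neighborFinset,
      directBundle_adj_iff]
    refine ⟨⟨?_, 1, .inl rfl, .inl rfl⟩, ⟨?_, -1, .inr rfl, .inl rfl⟩,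
      ⟨?_, 1, .inl rfl, .inr (hpred 1)⟩, ⟨?_, -1, .inr rfl, .inr (hpred (-1))⟩⟩ <;>
    simp [bundleSucc, pred, Prod.ext_iff, h1, hfst]
  have hcard : #{bundleSucc ℓ 1 v, bundleSucc ℓ (-1) v, pred 1, pred (-1)} = 4 := by
    refine Finset.card_eq_four.2 ⟨_, _, _, _, ?_, ?_, ?_, ?_, ?_, ?_, rfl⟩ <;>
    simp [bundleSucc, pred, Prod.ext_iff, hfst', hsnd, hsnd']
  rw [← card_neighborFinset_eq_degree, ← hcard]
  exact Finset.card_le_card hsub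

def bundleLabel (s t : ℕ) (v : ZMod m × ZMod n) : ZMod s := t * v.1.val + v.2.cast

lemma bundleLabel_bundleSucc [NeZero m] {s t : ℕ} (hsn : s ∣ n) {ℓ : ZMod n}
    (hℓ : (ℓ.cast : ZMod s) = t * m) (ε : ℤ) (u : ZMod m × ZMod n) :
    bundleLabel s t (bundleSucc ℓ ε u) = bundleLabel s t u + t + ε := by
  obtain ⟨i, j⟩ := u
  simp only [bundleLabel, bundleSucc, ZMod.cast_add hsn, ZMod.cast_intCast hsn]
  by_cases hi : i = -1
  · obtain ⟨m', rfl⟩ : ∃ m', m = m' + 1 := Nat.exists_eq_succ_of_ne_zero (NeZero.ne m)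
    subst hi
    rw [if_pos rfl, hℓ, neg_add_cancel, ZMod.val_zero, ZMod.val_neg_one]
    push_cast
    ring
  · rw [if_neg hi, ZMod.cast_zero, ZMod.val_add_one_of_ne_neg_one hi]
    push_cast
    ring

theorem isLD1Labeling_bundleLabel [NeZero m] {s t d : ℕ} (hsn : s ∣ n) {ℓ : ZMod n}
    (hℓ : (ℓ.cast : ZMod s) = t * m) (hs : Odd s) (hd : 1 ≤ d) (hdt : d + 1 ≤ t)
    (hts : t + d + 1 ≤ s) :
    IsLD1Labeling (directBundle m n ℓ) d (fun v ↦ (bundleLabel s t v).val) := by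
  have : NeZero s := ⟨by omega⟩
  have hstep := bundleLabel_bundleSucc hsn hℓ
  -- An edge raises the label by `t ± 1`, which is at least `d` away from `0` modulo `s`.
  have hedge (ε : ℤ) (hε : ε = 1 ∨ ε = -1) (u : ZMod m × ZMod n) :
      (d : ℤ) ≤ |((bundleLabel s t (bundleSucc ℓ ε u)).val : ℤ) - (bundleLabel s t u).val| := by
    rcases hε with rfl | rfl
    · exact ZMod.le_abs_val_sub_val (D := t + 1) (by rw [hstep]; push_cast; ring) (by omega)
        (by omega)
    · exact ZMod.le_abs_val_sub_val (D := t - 1)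
        (by rw [hstep, Nat.cast_sub (by omega)]; push_cast; ring) (by omega) (by omega)
  refine ⟨fun u v huv ↦ ?_, fun u v huv ↦ ?_⟩
  · obtain ⟨-, ε, hε, rfl | rfl⟩ := directBundle_adj_iff.1 huv
    · rw [abs_sub_comm]
      exact hedge ε hε u
    · exact hedge ε hε v
  obtain ⟨huv, -, w, hw⟩ := dist_eq_two_iff.1 huv
  obtain ⟨e, he, heven, he0, hes⟩ : ∃ e : ℤ, bundleLabel s t u - bundleLabel s t v = e ∧
      e % 2 = 0 ∧ e ≠ 0 ∧ e.natAbs < 2 * s := by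
    rw [mem_commonNeighbors, directBundle_adj_iff, directBundle_adj_iff] at hw
    obtain ⟨⟨-, ε₁, hε₁, rfl | rfl⟩, ⟨-, ε₂, hε₂, h | rfl⟩⟩ := hw
    · obtain rfl | hne := eq_or_ne ε₁ ε₂
      · exact absurd (bundleSucc_injective ℓ ε₁ h) huv
      refine ⟨ε₂ - ε₁, ?_, by omega, by omega, by omega⟩
      have := congrArg (bundleLabel s t) h
      rw [hstep, hstep] at this
      push_cast
      linear_combination this
    · refine ⟨-(2 * t + ε₁ + ε₂), ?_, by omega, by omega, by omega⟩
      rw [hstep, hstep]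
      push_cast
      ring
    · refine ⟨2 * t + ε₁ + ε₂, ?_, by omega, by omega, by omega⟩
      rw [h, hstep, hstep]
      push_cast
      ring
    · obtain rfl | hne := eq_or_ne ε₁ ε₂
      · exact absurd rfl huv
      refine ⟨ε₁ - ε₂, ?_, by omega, by omega, by omega⟩
      rw [hstep, hstep]
      push_cast
      ring
  have hne : bundleLabel s t u ≠ bundleLabel s t v := fun h ↦
    ZMod.intCast_ne_zero_of_even hs (Int.even_iff.2 heven) he0 hes (by rw [← he, h, sub_self])
  exact Int.one_le_abs (sub_ne_zero.2 (by exact_mod_cast (ZMod.val_injective s).ne hne))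

end Bundle

theorem stmt_19 (d m s n : ℕ) (a : ℕ) (k ℓ : ℤ) (c : ℕ)
    (hd1 : 1 ≤ d) (hd4 : d ≤ 4) (hm : 3 ≤ m) (hs : s = 2 * d + 3)
    (hc : 1 ≤ c) (hn : n = c * s)
    (ha : a = 1 ∨ a = 2)
    (hl : ℓ = (k * (s : ℤ) - (-1) ^ a * ((d : ℤ) + 1) * (m : ℤ)) % (n : ℤ)) :
    lambdaLD1 (directBundle m n (ℓ : ZMod n)) d = 2 * d + 2 := by
  classical
  have hsn : s ∣ n := hn ▸ dvd_mul_left s c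
  have hs_le : s ≤ n := hn ▸ Nat.le_mul_of_pos_left s hc
  have : NeZero m := ⟨by omega⟩
  have : NeZero n := ⟨by omega⟩
  have : NeZero s := ⟨by omega⟩
  have hℓ : ((ℓ : ZMod n).cast : ZMod s) = ((d + a : ℕ) : ZMod s) * m := by
    have hs0 : ((2 * d + 3 : ℕ) : ZMod s) = 0 := hs ▸ ZMod.natCast_self s
    rw [hl, ZMod.intCast_mod, ZMod.cast_intCast hsn]
    push_cast at hs0 ⊢
    rcases ha with rfl | rfl
    · linear_combination (k : ZMod s) * ZMod.natCast_self s
    · linear_combination (k : ZMod s) * ZMod.natCast_self s - (m : ZMod s) * hs0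
  refine lambdaLD1_eq_of_le_of_forall_le
    (isLD1Labeling_bundleLabel hsn hℓ ⟨d + 1, by omega⟩ hd1 (by omega) (by omega))
    (labelSpan_le_of_forall_le fun v ↦ by have := ZMod.val_lt (bundleLabel s (d + a) v); omega)
    fun g hg ↦ ?_
  have := hg.two_mul_add_le_labelSpan hd1 hd4 (four_le_minDegree_directBundle hm (by omega) _)
  omega
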